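/- Double robustness of the score, representer side: if α = α* satisfies the balancing equations E[1{G=∞}·α*(X)·h(X)] = E[1{G=g}·h(X)] for h = m and the outcome transport E[1{G=∞}·α*(X)·Y] = E[1{G=g}·m₀(X)], and θ₀ satisfies θ₀·p_g = E[1{G=g}Y] − E[1{G=g}m₀(X)], then for any measurable m the expected score E[ψ(W; θ₀, m, α*)] = 0, where ψ(W;θ,m,α) = 1{G=g}(Y − θ) − 1{G=g}m(X) − 1{G=∞}α(X)(Y − m(X)). -/
import Mathlib


open MeasureTheory

theorem stmt_14 {Ω 𝒳 𝒢 : Type*} [MeasurableSpace Ω] [DecidableEq 𝒢]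
    (μ : Measure Ω) [IsProbabilityMeasure μ]
    (Y : Ω → ℝ) (X : Ω → 𝒳) (G : Ω → 𝒢)
    (gval infval : 𝒢) (m m₀ αstar : 𝒳 → ℝ) (θ₀ pg : ℝ)
    -- indicator functions
    (Ig Iinf : Ω → ℝ)
    (hIg : Ig = fun ω => if G ω = gval then (1 : ℝ) else 0)
    (hIinf : Iinf = fun ω => if G ω = infval then (1 : ℝ) else 0)
    -- integrability
    (hint1 : Integrable (fun ω => Ig ω * Y ω) μ)
    (hint2 : Integrable (fun ω => Ig ω * m (X ω)) μ)
    (hint3 : Integrable (fun ω => Iinf ω * αstar (X ω) * Y ω) μ)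
    (hint4 : Integrable (fun ω => Iinf ω * αstar (X ω) * m (X ω)) μ)
    (hint5 : Integrable Ig μ)
    -- p_g = P(G = g) > 0 and definition of θ₀
    (hpg : pg = ∫ ω, Ig ω ∂μ) (hpos : 0 < pg)
    (hθ : θ₀ * pg = (∫ ω, Ig ω * Y ω ∂μ) - ∫ ω, Ig ω * m₀ (X ω) ∂μ)
    -- (i) balancing equation for h = m
    (hbal : ∫ ω, Iinf ω * αstar (X ω) * m (X ω) ∂μ
              = ∫ ω, Ig ω * m (X ω) ∂μ)
    -- (ii) outcome transport
    (htrans : ∫ ω, Iinf ω * αstar (X ω) * Y ω ∂μ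
              = ∫ ω, Ig ω * m₀ (X ω) ∂μ) :
    ∫ ω, (Ig ω * (Y ω - θ₀) - Ig ω * m (X ω)
        - Iinf ω * αstar (X ω) * (Y ω - m (X ω))) ∂μ = 0 := by
  have h1 : (fun ω => Ig ω * (Y ω - θ₀) - Ig ω * m (X ω)
        - Iinf ω * αstar (X ω) * (Y ω - m (X ω)))
      = fun ω => (Ig ω * Y ω - θ₀ * Ig ω - Ig ω * m (X ω))
        - (Iinf ω * αstar (X ω) * Y ω - Iinf ω * αstar (X ω) * m (X ω)) := by
    funext ω; ring
  have e1 := integral_sub (((hint1.sub (hint5.const_mul θ₀)).sub hint2))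
      (hint3.sub hint4)
  have e2 := integral_sub (hint1.sub (hint5.const_mul θ₀)) hint2
  have e3 := integral_sub hint1 (hint5.const_mul θ₀)
  have e4 := integral_sub hint3 hint4
  simp only [Pi.sub_apply] at e1 e2 e3 e4
  rw [h1, e1, e2, e3, e4, hbal, htrans, MeasureTheory.integral_const_mul, ← hpg]
  linarith [hθ]
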